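/- Let G be a graph with minimum degree at least 1, let u, v be vertices of G, and let (X_t)_{t≥0} be a simple random walk on G with X₀ = u. For an integer T ≥ 1, let N = #{1 ≤ t ≤ T : X_t = v} and let R_v(T) = Σ_{t=1}^{T} Pr(the walk started at v is at v after t steps). Then E[N²] ≤ (1 + 2·R_v(T))·E[N]. -/

import Mathlib

open scoped Classical BigOperators ENNReal

noncomputable section

namespace RW

variable {V : Type} [Fintype V] [DecidableEq V]

/-- An `(n,d,λ)`-graph: a `d`-regular graph whose adjacency-matrix eigenvalues,
apart from one (trivial) occurrence of `d`, are at most `lam` in absolute value. -/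
def IsNDL (G : SimpleGraph V) (d : ℕ) (lam : ℝ) : Prop :=
  (∀ v : V, (G.neighborSet v).ncard = d) ∧
    ∃ (hA : (SimpleGraph.adjMatrix ℝ G).IsHermitian) (i₀ : V),
      hA.eigenvalues i₀ = d ∧ ∀ i : V, i ≠ i₀ → |hA.eigenvalues i| ≤ lam

/-- One-step transition probability of the simple random walk on `G`. -/
def stepProb (G : SimpleGraph V) (a b : V) : ℝ :=
  if G.Adj a b then 1 / ((G.neighborSet a).ncard : ℝ) else 0

/-- Probability that the simple random walk follows the trajectory `x`. -/
def pathProb (G : SimpleGraph V) {L : ℕ} (x : Fin (L + 1) → V) : ℝ :=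
  ∏ i : Fin L, stepProb G (x i.castSucc) (x i.succ)

/-- Probability that the simple random walk of length `L` started at `v₀`
produces a trajectory lying in the event `E`. -/
def walkProb (G : SimpleGraph V) (L : ℕ) (v₀ : V) (E : Set (Fin (L + 1) → V)) : ℝ :=
  ∑ x : Fin (L + 1) → V, if x 0 = v₀ ∧ x ∈ E then pathProb G x else 0

/-- Expectation of `f` under the simple random walk of length `L` started at `v₀`. -/
def walkExp (G : SimpleGraph V) (L : ℕ) (v₀ : V) (f : (Fin (L + 1) → V) → ℝ) : ℝ :=
  ∑ x : Fin (L + 1) → V, if x 0 = v₀ then pathProb G x * f x else 0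

/-- The cover time: the maximum over starting vertices of the expected number of
steps needed to visit every vertex, written as `∑_{t ≥ 0} Pr(not covered by time t)`. -/
def coverTime (G : SimpleGraph V) : ℝ≥0∞ :=
  ⨆ v₀ : V, ∑' t : ℕ, ENNReal.ofReal (walkProb G t v₀ {x | ¬ ∀ v : V, ∃ i, x i = v})

/-- Number of times `1 ≤ t ≤ L` at which the trajectory `x` is at `v`. -/
def numVisits {L : ℕ} (x : Fin (L + 1) → V) (v : V) : ℕ :=
  (Finset.univ.filter fun i : Fin (L + 1) => i.val ≠ 0 ∧ x i = v).card

/-- The trace graph of a trajectory: edges of `G` traversed by the walk. -/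
def traceGraph (G : SimpleGraph V) {L : ℕ} (x : Fin (L + 1) → V) : SimpleGraph V where
  Adj a b := G.Adj a b ∧
    ∃ i : Fin L, (x i.castSucc = a ∧ x i.succ = b) ∨ (x i.castSucc = b ∧ x i.succ = a)
  symm := by
    constructor
    rintro a b ⟨hab, i, hi⟩
    exact ⟨hab.symm, i, hi.symm⟩
  loopless := by
    constructor
    rintro a ⟨haa, -⟩
    exact G.irrefl haa

/-- External neighborhood of a vertex set. -/
def extNbhd (H : SimpleGraph V) (X : Finset V) : Finset V :=
  Finset.univ.filter fun v => v ∉ X ∧ ∃ u ∈ X, H.Adj u v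

/-- A `C`-expander. -/
def IsCExpander (H : SimpleGraph V) (C : ℝ) : Prop :=
  (∀ X : Finset V, 1 ≤ X.card → (X.card : ℝ) ≤ (Fintype.card V : ℝ) / (2 * C) →
      C * (X.card : ℝ) ≤ ((extNbhd H X).card : ℝ)) ∧
    ∀ A B : Finset V, Disjoint A B →
      (Fintype.card V : ℝ) / (2 * C) ≤ (A.card : ℝ) →
      (Fintype.card V : ℝ) / (2 * C) ≤ (B.card : ℝ) →
      ∃ a ∈ A, ∃ b ∈ B, H.Adj a b

/-- Expected time for the walk started at `u` to first reach `v`,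
written as `∑_{t ≥ 0} Pr(v not yet visited during steps 1..t)`. -/
def hittingTime (G : SimpleGraph V) (u v : V) : ℝ≥0∞ :=
  ∑' t : ℕ, ENNReal.ofReal (walkProb G t u {x | ∀ i : Fin (t + 1), i.val ≠ 0 → x i ≠ v})

/-- Number of edges of `G` between two (disjoint) vertex sets. -/
def edgesBetween (G : SimpleGraph V) (A B : Finset V) : ℕ :=
  ∑ a ∈ A, (B.filter fun b => G.Adj a b).card


set_option linter.unusedSectionVars false
set_option linter.unusedVariables false

def ind (v c : V) : ℝ := if c = v then 1 else 0

lemma ind_nonneg (v c : V) : 0 ≤ ind v c := by unfold ind; positivity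

lemma stepProb_nonneg (G : SimpleGraph V) (a b : V) : 0 ≤ stepProb G a b := by
  unfold stepProb; positivity

lemma stepProb_rowsum (G : SimpleGraph V) (hdeg : ∀ w : V, 1 ≤ (G.neighborSet w).ncard)
    (a : V) : ∑ b : V, stepProb G a b = 1 := by
  unfold stepProb
  have hn : (G.neighborSet a).ncard = (Finset.univ.filter fun b => G.Adj a b).card := by
    rw [Set.ncard_eq_toFinset_card']; congr 1; ext b; simp
  rw [← Finset.sum_filter, Finset.sum_const, ← hn]
  have h0 : ((G.neighborSet a).ncard : ℝ) ≠ 0 := by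
    have := hdeg a; positivity
  rw [nsmul_eq_mul]
  field_simp

def phi (G : SimpleGraph V) : (L : ℕ) → (Fin (L + 1) → V → ℝ) → V → ℝ
  | 0, f, a => f 0 a
  | (L + 1), f, a => f 0 a * ∑ b : V, stepProb G a b * phi G L (fun t => f t.succ) b

lemma pathProb_cons (G : SimpleGraph V) {L : ℕ} (c : V) (y : Fin (L + 1) → V) :
    pathProb G (Fin.cons c y) = stepProb G c (y 0) * pathProb G y := by
  simp [pathProb, Fin.prod_univ_succ, ← Fin.succ_castSucc, Fin.cons_succ, Fin.cons_zero]

lemma phi_eq (G : SimpleGraph V) (L : ℕ) (f : Fin (L + 1) → V → ℝ) (a : V) :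
    ∑ x : Fin (L + 1) → V, (if x 0 = a then pathProb G x * ∏ t, f t (x t) else 0)
      = phi G L f a := by
  induction L generalizing a with
  | zero =>
    rw [Fintype.sum_equiv (Equiv.funUnique (Fin 1) V)
      (fun x => if x 0 = a then pathProb G x * ∏ t, f t (x t) else 0)
      (fun c => if c = a then f 0 c else 0)
      (fun x => by
        simp only [Equiv.funUnique_apply]
        by_cases h : x 0 = a <;> simp [h, pathProb, Fin.prod_univ_one])]
    rw [Finset.sum_ite_eq' Finset.univ a]; simp [phi]
  | succ L ih =>
    rw [← Fintype.sum_equiv (Fin.consEquiv (fun _ : Fin (L + 2) => V))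
      (fun p : V × (Fin (L + 1) → V) => if p.1 = a then
        (stepProb G p.1 (p.2 0) * pathProb G p.2) * (f 0 p.1 * ∏ t, f t.succ (p.2 t)) else 0)
      (fun x => if x 0 = a then pathProb G x * ∏ t, f t (x t) else 0)
      (fun p => by
        obtain ⟨c, y⟩ := p
        dsimp only [Fin.consEquiv, Equiv.coe_fn_mk]
        have h0 : (Fin.cons c y : Fin (L + 2) → V) 0 = c := rfl
        have hp : (∏ t : Fin (L + 2), f t ((Fin.cons c y : Fin (L + 2) → V) t))
            = f 0 c * ∏ t : Fin (L + 1), f t.succ (y t) := by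
          rw [Fin.prod_univ_succ]
          simp [Fin.cons_succ]
        simp only [h0, pathProb_cons, hp])]
    rw [Fintype.sum_prod_type]
    have step1 : ∀ c : V, (∑ y : Fin (L + 1) → V, if c = a then
          (stepProb G c (y 0) * pathProb G y) * (f 0 c * ∏ t, f t.succ (y t)) else 0)
        = if c = a then (∑ y : Fin (L + 1) → V,
          (stepProb G c (y 0) * pathProb G y) * (f 0 c * ∏ t, f t.succ (y t))) else 0 := by
      intro c; by_cases h : c = a <;> simp [h]
    rw [Finset.sum_congr rfl (fun c _ => step1 c), Finset.sum_ite_eq' Finset.univ a]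
    simp only [Finset.mem_univ, if_true]
    have key : ∀ b : V, (∑ y : Fin (L + 1) → V,
          if y 0 = b then pathProb G y * ∏ t, f t.succ (y t) else 0)
        = phi G L (fun t => f t.succ) b := fun b => ih _ b
    have expand : ∀ g : (Fin (L + 1) → V) → ℝ,
        (∑ b : V, stepProb G a b * (∑ y : Fin (L + 1) → V, if y 0 = b then g y else 0))
        = ∑ y : Fin (L + 1) → V, stepProb G a (y 0) * g y := by
      intro g
      simp only [Finset.mul_sum]
      rw [Finset.sum_comm]
      apply Finset.sum_congr rfl; intro y _
      have h1 : ∀ b : V, stepProb G a b * (if y 0 = b then g y else 0)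
          = if y 0 = b then stepProb G a b * g y else 0 := fun b => by
        by_cases h : y 0 = b <;> simp [h]
      rw [Finset.sum_congr rfl (fun b _ => h1 b),
        Finset.sum_ite_eq Finset.univ (y 0) (fun b => stepProb G a b * g y)]
      simp
    have e0 : phi G (L + 1) f a
        = f 0 a * ∑ b : V, stepProb G a b * phi G L (fun t => f t.succ) b := rfl
    have e1 : (∑ b : V, stepProb G a b * phi G L (fun t => f t.succ) b)
        = ∑ b : V, stepProb G a b * (∑ y : Fin (L + 1) → V,
            if y 0 = b then pathProb G y * ∏ t, f t.succ (y t) else 0) :=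
      Finset.sum_congr rfl fun b _ => by rw [key b]
    rw [e0, e1, expand (fun y => pathProb G y * ∏ t, f t.succ (y t)), Finset.mul_sum]
    apply Finset.sum_congr rfl; intro y _; ring

lemma phi_succ (G : SimpleGraph V) (L : ℕ) (f : Fin (L + 2) → V → ℝ) (a : V) :
    phi G (L + 1) f a = f 0 a * ∑ b : V, stepProb G a b * phi G L (fun t => f t.succ) b := rfl

lemma phi_congr (G : SimpleGraph V) {L : ℕ} {f g : Fin (L + 1) → V → ℝ} (a : V)
    (h : ∀ t c, f t c = g t c) : phi G L f a = phi G L g a := by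
  have : f = g := funext fun t => funext fun c => h t c
  rw [this]

lemma phi_nonneg (G : SimpleGraph V) :
    ∀ (L : ℕ) (f : Fin (L + 1) → V → ℝ), (∀ t c, 0 ≤ f t c) → ∀ a, 0 ≤ phi G L f a
  | 0, f, h, a => h 0 a
  | (L + 1), f, h, a =>
    mul_nonneg (h 0 a) (Finset.sum_nonneg fun b _ =>
      mul_nonneg (stepProb_nonneg G a b)
        (phi_nonneg G L _ (fun t c => h t.succ c) b))

lemma phi_one (G : SimpleGraph V) (hdeg : ∀ w : V, 1 ≤ (G.neighborSet w).ncard) :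
    ∀ (L : ℕ) (a : V), phi G L (fun _ _ => (1 : ℝ)) a = 1 := by
  intro L
  induction L with
  | zero => intro a; rfl
  | succ L ih =>
    intro a
    rw [phi_succ]
    simp only [ih, mul_one, stepProb_rowsum G hdeg a, one_mul]

def Aval (G : SimpleGraph V) (v : V) (L i : ℕ) (a : V) : ℝ :=
  phi G L (fun t c => if t.val = i then ind v c else 1) a

def Qval (G : SimpleGraph V) (v : V) (L i j : ℕ) (a : V) : ℝ :=
  phi G L (fun t c => if t.val = i ∨ t.val = j then ind v c else 1) a

lemma Aval_nonneg (G : SimpleGraph V) (v : V) (L i : ℕ) (a : V) : 0 ≤ Aval G v L i a :=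
  phi_nonneg G L _ (fun t c => by by_cases h : t.val = i <;> simp [h, ind_nonneg]) a

lemma Aval_zero (G : SimpleGraph V) (hdeg : ∀ w : V, 1 ≤ (G.neighborSet w).ncard)
    (v : V) (L : ℕ) (a : V) : Aval G v L 0 a = ind v a := by
  cases L with
  | zero => simp [Aval, phi]
  | succ L =>
    unfold Aval
    rw [phi_succ]
    have h2 : ∀ b : V, phi G L (fun t (c : V) =>
        if ((t.succ : Fin (L + 2)).val = 0) then ind v c else (1 : ℝ)) b = 1 := by
      intro b
      rw [phi_congr G b (g := fun _ _ => (1 : ℝ)) (fun t c => by simp [Fin.val_succ])]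
      exact phi_one G hdeg L b
    simp only [h2, mul_one, stepProb_rowsum G hdeg a]
    simp

lemma Aval_succ (G : SimpleGraph V) (v : V) (L i : ℕ) (hi : 1 ≤ i) (a : V) :
    Aval G v (L + 1) i a = ∑ b : V, stepProb G a b * Aval G v L (i - 1) b := by
  unfold Aval
  rw [phi_succ]
  have h0 : (if ((0 : Fin (L + 2)).val = i) then ind v a else (1 : ℝ)) = 1 := by
    have h : (0 : Fin (L + 2)).val = 0 := rfl
    rw [h, if_neg (by omega)]
  rw [h0, one_mul]
  apply Finset.sum_congr rfl
  intro b _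
  congr 1
  exact phi_congr G b fun t c => by
    have : ((t.succ : Fin (L + 2)).val = i) ↔ (t.val = i - 1) := by
      simp [Fin.val_succ]; omega
    simp only [this]

lemma Aval_stable (G : SimpleGraph V) (hdeg : ∀ w : V, 1 ≤ (G.neighborSet w).ncard) (v : V) :
    ∀ (i L : ℕ) (a : V), i ≤ L → Aval G v L i a = Aval G v i i a := by
  intro i
  induction i with
  | zero => intro L a _; rw [Aval_zero G hdeg, Aval_zero G hdeg]
  | succ i ih =>
    intro L a hL
    cases L with
    | zero => omega
    | succ L =>
      rw [Aval_succ G v L (i + 1) (by omega) a, Aval_succ G v i (i + 1) (by omega) a]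
      apply Finset.sum_congr rfl
      intro b _
      congr 1
      simp only [Nat.add_sub_cancel]
      exact ih L b (by omega)

lemma Qval_diag (G : SimpleGraph V) (v : V) (L i : ℕ) (a : V) :
    Qval G v L i i a = Aval G v L i a :=
  phi_congr G a fun t c => by simp

lemma Qval_comm (G : SimpleGraph V) (v : V) (L i j : ℕ) (a : V) :
    Qval G v L i j a = Qval G v L j i a :=
  phi_congr G a fun t c => if_congr or_comm rfl rfl

lemma Qval_succ (G : SimpleGraph V) (v : V) (L i j : ℕ) (hi : 1 ≤ i) (hj : 1 ≤ j) (a : V) :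
    Qval G v (L + 1) i j a = ∑ b : V, stepProb G a b * Qval G v L (i - 1) (j - 1) b := by
  unfold Qval
  rw [phi_succ]
  have h0 : (if ((0 : Fin (L + 2)).val = i ∨ (0 : Fin (L + 2)).val = j)
      then ind v a else (1 : ℝ)) = 1 := by
    have h : (0 : Fin (L + 2)).val = 0 := rfl
    rw [h, if_neg (by omega)]
  rw [h0, one_mul]
  apply Finset.sum_congr rfl
  intro b _
  congr 1
  exact phi_congr G b fun t c => by
    have : ((t.succ : Fin (L + 2)).val = i ∨ (t.succ : Fin (L + 2)).val = j)
        ↔ (t.val = i - 1 ∨ t.val = j - 1) := by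
      simp [Fin.val_succ]; omega
    simp only [this]

lemma Aval_self_one (G : SimpleGraph V) (v : V) : Aval G v 0 0 v = 1 := by
  simp [Aval, phi, ind]

lemma Qval_split (G : SimpleGraph V) (hdeg : ∀ w : V, 1 ≤ (G.neighborSet w).ncard) (v : V) :
    ∀ (i j L : ℕ) (a : V), i ≤ j → j ≤ L →
      Qval G v L i j a = Aval G v L i a * Aval G v (j - i) (j - i) v := by
  intro i
  induction i with
  | zero =>
    intro j L a _ hjL
    rcases Nat.eq_zero_or_pos j with hj | hj
    · subst hj
      rw [Qval_diag, Aval_self_one]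
      simp
    · cases L with
      | zero => omega
      | succ L =>
        unfold Qval
        rw [phi_succ]
        have h0 : (if ((0 : Fin (L + 2)).val = 0 ∨ (0 : Fin (L + 2)).val = j)
            then ind v a else (1 : ℝ)) = ind v a := by simp
        rw [h0]
        have h1 : ∀ b : V, phi G L (fun t c =>
            if ((t.succ : Fin (L + 2)).val = 0 ∨ (t.succ : Fin (L + 2)).val = j)
              then ind v c else (1 : ℝ)) b = Aval G v L (j - 1) b := by
          intro b
          exact phi_congr G b fun t c => by
            have : ((t.succ : Fin (L + 2)).val = 0 ∨ (t.succ : Fin (L + 2)).val = j)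
                ↔ (t.val = j - 1) := by simp [Fin.val_succ]; omega
          
            simp only [this]
        simp only [h1]
        rw [← Aval_succ G v L j hj a, Aval_stable G hdeg v j (L + 1) a hjL,
          Aval_zero G hdeg]
        simp only [Nat.sub_zero]
        by_cases hav : a = v
        · subst hav; simp
        · simp [ind, hav]
  | succ i ih =>
    intro j L a hij hjL
    cases L with
    | zero => omega
    | succ L =>
      cases j with
      | zero => omega
      | succ j =>
        rw [Qval_succ G v L (i + 1) (j + 1) (by omega) (by omega) a]
        simp only [Nat.add_sub_cancel]
        rw [Finset.sum_congr rfl fun b _ => by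
          rw [ih j L b (by omega) (by omega)]]
        rw [Aval_succ G v L (i + 1) (by omega) a]
        simp only [Nat.add_sub_cancel, Nat.succ_sub_succ]
        rw [Finset.sum_mul]
        apply Finset.sum_congr rfl
        intro b _
        simp only [Nat.sub_zero]
        ring

lemma prod_fA (v : V) {L : ℕ} (x : Fin (L + 1) → V) (i : Fin (L + 1)) :
    (∏ t : Fin (L + 1), if t.val = i.val then ind v (x t) else 1) = ind v (x i) := by
  rw [Finset.prod_eq_single i]
  · simp
  · intro t _ ht
    have : t.val ≠ i.val := fun h => ht (Fin.ext h)
    simp [this]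
  · simp

lemma prod_fQ (v : V) {L : ℕ} (x : Fin (L + 1) → V) (i j : Fin (L + 1)) :
    (∏ t : Fin (L + 1), if t.val = i.val ∨ t.val = j.val then ind v (x t) else 1)
      = if x i = v ∧ x j = v then 1 else 0 := by
  by_cases hij : i = j
  · subst hij
    have he : ∀ t : Fin (L + 1), (if t.val = i.val ∨ t.val = i.val then ind v (x t) else (1:ℝ))
        = if t.val = i.val then ind v (x t) else 1 := fun t => by simp
    rw [Finset.prod_congr rfl fun t _ => he t, prod_fA]
    by_cases h : x i = v <;> simp [ind, h]
  · rw [← Finset.prod_filter]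
    have hf : (Finset.univ.filter fun t : Fin (L + 1) => t.val = i.val ∨ t.val = j.val)
        = {i, j} := by
      ext t
      simp [Fin.ext_iff]
    rw [hf, Finset.prod_pair hij]
    by_cases h1 : x i = v <;> by_cases h2 : x j = v <;> simp [ind, h1, h2]

lemma walkProb_last (G : SimpleGraph V) (t : ℕ) (v : V) :
    walkProb G t v {x | x (Fin.last t) = v} = Aval G v t t v := by
  unfold walkProb Aval
  rw [← phi_eq G t (fun s c => if s.val = t then ind v c else 1) v]
  apply Finset.sum_congr rfl
  intro x _
  have hp : (∏ s : Fin (t + 1), if (s : Fin (t+1)).val = t then ind v (x s) else (1:ℝ))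
      = ind v (x (Fin.last t)) := by
    have := prod_fA v x (Fin.last t)
    simpa [Fin.val_last] using this
  rw [hp]
  by_cases h0 : x 0 = v <;> by_cases hl : x (Fin.last t) = v <;>
    simp [h0, hl, ind, Set.mem_setOf_eq]

lemma walkProb_nonneg (G : SimpleGraph V) (L : ℕ) (v₀ : V) (E : Set (Fin (L + 1) → V)) :
    0 ≤ walkProb G L v₀ E := by
  apply Finset.sum_nonneg
  intro x _
  split
  · exact Finset.prod_nonneg fun i _ => stepProb_nonneg G _ _
  · exact le_refl 0

lemma hdist {ι : Type*} (s : Finset ι) (P : Prop) [Decidable P] (r : ℝ) (c : ι → ℝ) :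
    (if P then r * ∑ i ∈ s, c i else 0) = ∑ i ∈ s, if P then r * c i else 0 := by
  split
  · exact Finset.mul_sum s c r
  · simp

lemma cast_numVisits {L : ℕ} (x : Fin (L + 1) → V) (v : V) :
    ((numVisits x v : ℝ)) = ∑ i : Fin (L + 1), if i.val ≠ 0 ∧ x i = v then (1 : ℝ) else 0 := by
  unfold numVisits
  rw [Finset.card_filter, Nat.cast_sum]
  apply Finset.sum_congr rfl
  intro i _
  split <;> simp

lemma exp_visits (G : SimpleGraph V) (T : ℕ) (u v : V) :
    walkExp G T u (fun x => (numVisits x v : ℝ))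
      = ∑ i ∈ Finset.univ.filter (fun i : Fin (T + 1) => i.val ≠ 0), Aval G v T i.val u := by
  unfold walkExp
  have e1 : ∀ x : Fin (T + 1) → V,
      (if x 0 = u then pathProb G x * (fun x => (numVisits x v : ℝ)) x else 0)
      = ∑ i : Fin (T + 1),
          (if x 0 = u then pathProb G x * (if i.val ≠ 0 ∧ x i = v then (1 : ℝ) else 0) else 0) := by
    intro x
    dsimp only
    rw [cast_numVisits x v, hdist]
  rw [Finset.sum_congr rfl fun x _ => e1 x, Finset.sum_comm]
  have e2 : ∀ i : Fin (T + 1), i ∉ Finset.univ.filter (fun i : Fin (T + 1) => i.val ≠ 0) →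
      (∑ x : Fin (T + 1) → V,
        if x 0 = u then pathProb G x * (if i.val ≠ 0 ∧ x i = v then (1 : ℝ) else 0) else 0)
        = 0 := by
    intro i hi
    have h0 : i.val = 0 := by simpa using hi
    exact Finset.sum_eq_zero fun x _ => by simp [h0]
  rw [← Finset.sum_subset (Finset.filter_subset _ Finset.univ) (fun i _ hi => e2 i hi)]
  apply Finset.sum_congr rfl
  intro i hi
  have hi0 : i.val ≠ 0 := (Finset.mem_filter.mp hi).2
  unfold Aval
  rw [← phi_eq G T (fun t c => if t.val = i.val then ind v c else 1) u]
  apply Finset.sum_congr rfl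
  intro x _
  rw [prod_fA v x i]
  by_cases h0 : x 0 = u <;> by_cases hv : x i = v <;> simp [h0, hv, hi0, ind]

lemma exp_visits_sq (G : SimpleGraph V) (T : ℕ) (u v : V) :
    walkExp G T u (fun x => ((numVisits x v : ℝ)) ^ 2)
      = ∑ i ∈ Finset.univ.filter (fun i : Fin (T + 1) => i.val ≠ 0),
          ∑ j ∈ Finset.univ.filter (fun j : Fin (T + 1) => j.val ≠ 0),
            Qval G v T i.val j.val u := by
  unfold walkExp
  have e1 : ∀ x : Fin (T + 1) → V,
      (if x 0 = u then pathProb G x * (fun x => ((numVisits x v : ℝ)) ^ 2) x else 0)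
      = ∑ i : Fin (T + 1), ∑ j : Fin (T + 1),
          (if x 0 = u then pathProb G x *
            ((if i.val ≠ 0 ∧ x i = v then (1 : ℝ) else 0)
              * (if j.val ≠ 0 ∧ x j = v then (1 : ℝ) else 0)) else 0) := by
    intro x
    dsimp only
    rw [sq, cast_numVisits x v, Finset.sum_mul_sum, hdist]
    apply Finset.sum_congr rfl
    intro i _
    rw [hdist]
  rw [Finset.sum_congr rfl fun x _ => e1 x, Finset.sum_comm]
  rw [Finset.sum_congr rfl fun i (_ : i ∈ Finset.univ) => Finset.sum_comm]
  have e2 : ∀ i : Fin (T + 1), i ∉ Finset.univ.filter (fun i : Fin (T + 1) => i.val ≠ 0) →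
      (∑ j : Fin (T + 1), ∑ x : Fin (T + 1) → V,
        if x 0 = u then pathProb G x *
          ((if i.val ≠ 0 ∧ x i = v then (1 : ℝ) else 0)
            * (if j.val ≠ 0 ∧ x j = v then (1 : ℝ) else 0)) else 0) = 0 := by
    intro i hi
    have h0 : i.val = 0 := by simpa using hi
    exact Finset.sum_eq_zero fun j _ => Finset.sum_eq_zero fun x _ => by simp [h0]
  rw [← Finset.sum_subset (Finset.filter_subset _ Finset.univ) (fun i _ hi => e2 i hi)]
  apply Finset.sum_congr rfl
  intro i hi
  have hi0 : i.val ≠ 0 := (Finset.mem_filter.mp hi).2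
  have e3 : ∀ j : Fin (T + 1), j ∉ Finset.univ.filter (fun j : Fin (T + 1) => j.val ≠ 0) →
      (∑ x : Fin (T + 1) → V,
        if x 0 = u then pathProb G x *
          ((if i.val ≠ 0 ∧ x i = v then (1 : ℝ) else 0)
            * (if j.val ≠ 0 ∧ x j = v then (1 : ℝ) else 0)) else 0) = 0 := by
    intro j hj
    have h0 : j.val = 0 := by simpa using hj
    exact Finset.sum_eq_zero fun x _ => by simp [h0]
  rw [← Finset.sum_subset (Finset.filter_subset _ Finset.univ) (fun j _ hj => e3 j hj)]
  apply Finset.sum_congr rfl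
  intro j hj
  have hj0 : j.val ≠ 0 := (Finset.mem_filter.mp hj).2
  unfold Qval
  rw [← phi_eq G T (fun t c => if t.val = i.val ∨ t.val = j.val then ind v c else 1) u]
  apply Finset.sum_congr rfl
  intro x _
  rw [prod_fQ v x i j]
  by_cases h0 : x 0 = u <;> by_cases hv : x i = v <;> by_cases hw : x j = v <;>
    simp [h0, hv, hw, hi0, hj0]

set_option maxHeartbeats 1600000 in
/-- second-moment bound on the number of visits `N` to `v` during the
first `T` steps of a walk started at `u`: `E[N²] ≤ (1 + 2·R_v(T))·E[N]`, where
`R_v(T) = Σ_{t=1}^T Pr(walk started at v is at v after t steps)`. -/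
theorem second_moment_visits
    {V : Type} [Fintype V] [DecidableEq V] (G : SimpleGraph V)
    (hdeg : ∀ w : V, 1 ≤ (G.neighborSet w).ncard)
    (u v : V) (T : ℕ) (hT : 1 ≤ T) :
    walkExp G T u (fun x => ((numVisits x v : ℝ)) ^ 2) ≤
      (1 + 2 * ∑ t ∈ Finset.Icc 1 T,
          walkProb G t v {x | x (Fin.last t) = v}) *
        walkExp G T u (fun x => (numVisits x v : ℝ)) := by
  rw [exp_visits_sq G T u v, exp_visits G T u v,
    Finset.sum_congr rfl fun t (_ : t ∈ Finset.Icc 1 T) => walkProb_last G t v]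
  set S := Finset.univ.filter (fun i : Fin (T + 1) => i.val ≠ 0) with hS
  set R := ∑ t ∈ Finset.Icc 1 T, Aval G v t t v with hRdef
  set EN := ∑ i ∈ S, Aval G v T i.val u with hENdef
  have hRnn : 0 ≤ R := Finset.sum_nonneg fun t _ => Aval_nonneg G v t t v
  have hENnn : 0 ≤ EN := Finset.sum_nonneg fun i _ => Aval_nonneg G v T i.val u
  have hprod : (∑ i ∈ S, ∑ j ∈ S, Qval G v T i.val j.val u)
      = ∑ p ∈ S ×ˢ S, Qval G v T p.1.val p.2.val u :=
    (Finset.sum_product S S (fun p => Qval G v T p.1.val p.2.val u)).symm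
  have h1 := Finset.sum_filter_add_sum_filter_not (S ×ˢ S)
    (fun p : Fin (T + 1) × Fin (T + 1) => p.1.val < p.2.val)
    (fun p => Qval G v T p.1.val p.2.val u)
  have h2 := Finset.sum_filter_add_sum_filter_not
    ((S ×ˢ S).filter (fun p : Fin (T + 1) × Fin (T + 1) => ¬ p.1.val < p.2.val))
    (fun p : Fin (T + 1) × Fin (T + 1) => p.2.val < p.1.val)
    (fun p => Qval G v T p.1.val p.2.val u)
  have hfe1 : ((S ×ˢ S).filter (fun p : Fin (T + 1) × Fin (T + 1) => ¬ p.1.val < p.2.val)).filter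
        (fun p => p.2.val < p.1.val)
      = (S ×ˢ S).filter (fun p => p.2.val < p.1.val) := by
    ext p
    simp only [Finset.mem_filter]
    constructor
    · rintro ⟨⟨hm, -⟩, h₂⟩; exact ⟨hm, h₂⟩
    · rintro ⟨hm, h₂⟩; exact ⟨⟨hm, by omega⟩, h₂⟩
  have hfe2 : ((S ×ˢ S).filter (fun p : Fin (T + 1) × Fin (T + 1) => ¬ p.1.val < p.2.val)).filter
        (fun p => ¬ p.2.val < p.1.val)
      = (S ×ˢ S).filter (fun p => p.1 = p.2) := by
    ext p
    simp only [Finset.mem_filter]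
    constructor
    · rintro ⟨⟨hm, h₁⟩, h₂⟩; exact ⟨hm, Fin.ext (by omega)⟩
    · rintro ⟨hm, h₂⟩
      have : p.1.val = p.2.val := by rw [h₂]
      exact ⟨⟨hm, by omega⟩, by omega⟩
  rw [hfe1, hfe2] at h2
  have hgt : (∑ p ∈ (S ×ˢ S).filter (fun p : Fin (T + 1) × Fin (T + 1) => p.2.val < p.1.val),
        Qval G v T p.1.val p.2.val u)
      = ∑ p ∈ (S ×ˢ S).filter (fun p : Fin (T + 1) × Fin (T + 1) => p.1.val < p.2.val),
        Qval G v T p.1.val p.2.val u := by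
    apply Finset.sum_nbij' (i := Prod.swap) (j := Prod.swap)
    · intro p hp
      simp only [Finset.mem_filter, Finset.mem_product] at hp ⊢
      exact ⟨⟨hp.1.2, hp.1.1⟩, hp.2⟩
    · intro p hp
      simp only [Finset.mem_filter, Finset.mem_product] at hp ⊢
      exact ⟨⟨hp.1.2, hp.1.1⟩, hp.2⟩
    · intro p _; rfl
    · intro p _; rfl
    · intro p _
      exact Qval_comm G v T p.1.val p.2.val u
  have hdiag : (∑ p ∈ (S ×ˢ S).filter (fun p : Fin (T + 1) × Fin (T + 1) => p.1 = p.2),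
        Qval G v T p.1.val p.2.val u) = EN := by
    rw [hENdef]
    apply Finset.sum_nbij' (i := fun p => p.1) (j := fun i => (i, i))
    · intro p hp
      simp only [Finset.mem_filter, Finset.mem_product] at hp
      exact hp.1.1
    · intro i hi
      simp only [Finset.mem_filter, Finset.mem_product]
      exact ⟨⟨hi, hi⟩, trivial⟩
    · intro p hp
      simp only [Finset.mem_filter] at hp
      exact Prod.ext rfl hp.2
    · intro i _; rfl
    · intro p hp
      simp only [Finset.mem_filter] at hp
      rw [show p.2 = p.1 from hp.2.symm, Qval_diag]
  have hLt : (∑ p ∈ (S ×ˢ S).filter (fun p : Fin (T + 1) × Fin (T + 1) => p.1.val < p.2.val),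
        Qval G v T p.1.val p.2.val u) ≤ EN * R := by
    rw [Finset.sum_filter, Finset.sum_product]
    have hinner : ∀ i ∈ S, (∑ j ∈ S, if i.val < j.val then Qval G v T i.val j.val u else 0)
        ≤ Aval G v T i.val u * R := by
      intro i _
      rw [← Finset.sum_filter]
      have hq : ∀ j ∈ S.filter (fun j => i.val < j.val),
          Qval G v T i.val j.val u
            = Aval G v T i.val u * Aval G v (j.val - i.val) (j.val - i.val) v := by
        intro j hj
        have hij : i.val < j.val := (Finset.mem_filter.mp hj).2
        exact Qval_split G hdeg v i.val j.val T u (le_of_lt hij) (Nat.lt_succ_iff.mp j.isLt)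
      rw [Finset.sum_congr rfl hq, ← Finset.mul_sum]
      apply mul_le_mul_of_nonneg_left _ (Aval_nonneg G v T i.val u)
      have hinj : ∀ j₁ ∈ S.filter (fun j => i.val < j.val),
          ∀ j₂ ∈ S.filter (fun j => i.val < j.val),
          j₁.val - i.val = j₂.val - i.val → j₁ = j₂ := by
        intro j₁ hj₁ j₂ hj₂ h
        have h₁ : i.val < j₁.val := (Finset.mem_filter.mp hj₁).2
        have h₂ : i.val < j₂.val := (Finset.mem_filter.mp hj₂).2
        exact Fin.ext (by omega)
      rw [← Finset.sum_image (f := fun t => Aval G v t t v) hinj]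
      apply Finset.sum_le_sum_of_subset_of_nonneg
      · intro t ht
        obtain ⟨j, hj, rfl⟩ := Finset.mem_image.mp ht
        have hij : i.val < j.val := (Finset.mem_filter.mp hj).2
        have hjT : j.val < T + 1 := j.isLt
        exact Finset.mem_Icc.mpr ⟨by omega, by omega⟩
      · intro t _ _
        exact Aval_nonneg G v t t v
    calc (∑ i ∈ S, ∑ j ∈ S, if i.val < j.val then Qval G v T i.val j.val u else 0)
        ≤ ∑ i ∈ S, Aval G v T i.val u * R := Finset.sum_le_sum hinner
      _ = EN * R := by rw [hENdef, Finset.sum_mul]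
  have hexp : (1 + 2 * R) * EN = EN + 2 * (EN * R) := by ring
  rw [hprod]
  linarith [h1, h2, hgt, hdiag, hLt, hexp]

end RW
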